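/- Let f be real analytic near O with f(O) = 0, ∇f(O) = 0, and invertible Hessian H₀ = Hs(f)(O) (a Morse singularity). Let γ be a half-trajectory of the unit gradient field of f with f negative and increasing along γ and γ(s) → O, and let ν be its limit of secants. Then ν is an eigen-vector of H₀ with a negative eigen-value μ (H₀·ν = μ·ν with μ < 0), and |∇f(γ(s))| / |γ(s)| → −μ as s → L. -/

import Mathlib

/-!
Near the Morse point the gradient is `∇f(x) = H₀ x + o(|x|)`, so along `γ` the rescaled
gradient `∇f(γ s)/|γ s|` tends to `H₀ ν ≠ 0` and the unit gradient field `γ'` tends to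
`w = H₀ ν/|H₀ ν|`. A curve ending at `O` whose velocity tends to `w` satisfies
`γ s = -(L - s) w + o(L - s)`, so its limit of secants is `-w`. Hence `ν = -w`, i.e.
`H₀ ν = -|H₀ ν| ν`, and `|∇f(γ s)|/|γ s| → |H₀ ν|`.
-/

open scoped Topology
open Filter Set

variable {E : Type*} [NormedAddCommGroup E] [NormedSpace ℝ E]

theorem norm_le_mul_sub_of_tendsto_nhdsLT_zero {h h' : ℝ → E} {a L C s : ℝ}
    (hderiv : ∀ t ∈ Ioo a L, HasDerivAt h (h' t) t) (hbound : ∀ t ∈ Ioo a L, ‖h' t‖ ≤ C)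
    (hlim : Tendsto h (𝓝[<] L) (𝓝 0)) (hs : s ∈ Ioo a L) :
    ‖h s‖ ≤ C * (L - s) := by
  have hC : 0 ≤ C := (norm_nonneg _).trans (hbound s hs)
  have hdist : Tendsto (fun t => ‖h t - h s‖) (𝓝[<] L) (𝓝 ‖h s‖) := by
    simpa using (hlim.sub_const (h s)).norm
  refine le_of_tendsto hdist ?_
  filter_upwards [Ioo_mem_nhdsLT hs.2] with t ht
  calc ‖h t - h s‖ ≤ C * ‖t - s‖ :=
        (convex_Ioo a L).norm_image_sub_le_of_norm_hasDerivWithin_le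
          (fun x hx => (hderiv x hx).hasDerivWithinAt) hbound hs ⟨hs.1.trans ht.1, ht.2⟩
    _ = C * (t - s) := by rw [Real.norm_of_nonneg (sub_nonneg.2 ht.1.le)]
    _ ≤ C * (L - s) := by gcongr; exact ht.2.le

theorem tendsto_inv_sub_smul_of_tendsto_deriv {γ γ' : ℝ → E} {L : ℝ} {w : E}
    (hderiv : ∀ᶠ s in 𝓝[<] L, HasDerivAt γ (γ' s) s)
    (hγ : Tendsto γ (𝓝[<] L) (𝓝 0)) (hγ' : Tendsto γ' (𝓝[<] L) (𝓝 w)) :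
    Tendsto (fun s => (L - s)⁻¹ • γ s) (𝓝[<] L) (𝓝 (-w)) := by
  rw [Metric.tendsto_nhds]
  intro ε hε
  obtain ⟨a, haL, ha⟩ := mem_nhdsLT_iff_exists_Ioo_subset.1
    (hderiv.and (hγ' (Metric.ball_mem_nhds w (half_pos hε))))
  set h : ℝ → E := fun t => γ t + (L - t) • w
  have hlim : Tendsto h (𝓝[<] L) (𝓝 0) := by
    have hlin : Tendsto (fun t : ℝ => (L - t) • w) (𝓝[<] L) (𝓝 0) := by
      refine Tendsto.mono_left ?_ nhdsWithin_le_nhds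
      exact ((continuous_const.sub continuous_id).smul continuous_const).tendsto' L 0 (by simp)
    simpa using hγ.add hlin
  have hderiv_h : ∀ t ∈ Ioo a L, HasDerivAt h (γ' t - w) t := fun t ht => by
    exact ((ha ht).1.add (((hasDerivAt_id t).const_sub L).smul_const w)).congr_deriv
      (by simp [sub_eq_add_neg])
  have hbound : ∀ t ∈ Ioo a L, ‖γ' t - w‖ ≤ ε / 2 := fun t ht =>
    (dist_eq_norm (γ' t) w).symm.trans_le (ha ht).2.le
  filter_upwards [Ioo_mem_nhdsLT (haL : a < L)] with s hs
  have hLs : 0 < L - s := sub_pos.2 hs.2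
  have hrw : (L - s)⁻¹ • γ s - -w = (L - s)⁻¹ • h s := by
    simp only [h, smul_add, smul_smul, inv_mul_cancel₀ hLs.ne', one_smul, sub_neg_eq_add]
  rw [dist_eq_norm, hrw, norm_smul, Real.norm_of_nonneg (inv_nonneg.2 hLs.le)]
  calc (L - s)⁻¹ * ‖h s‖ ≤ (L - s)⁻¹ * (ε / 2 * (L - s)) := by
        gcongr; exact norm_le_mul_sub_of_tendsto_nhdsLT_zero hderiv_h hbound hlim hs
    _ = ε / 2 := by field_simp
    _ < ε := half_lt_self hε

theorem Filter.Tendsto.inv_norm_smul_of_pos_smul {α : Type*} {l : Filter α} {c : α → ℝ}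
    {v : α → E} {u : E} (h : Tendsto (fun x => c x • v x) l (𝓝 u)) (hc : ∀ᶠ x in l, 0 < c x)
    (hu : u ≠ 0) : Tendsto (fun x => ‖v x‖⁻¹ • v x) l (𝓝 (‖u‖⁻¹ • u)) := by
  refine ((h.norm.inv₀ (norm_ne_zero_iff.2 hu)).smul h).congr' ?_
  filter_upwards [hc] with x hx
  rw [norm_smul, Real.norm_of_nonneg hx.le, smul_smul, mul_inv, mul_right_comm,
    inv_mul_cancel₀ hx.ne', one_mul]

theorem HasFDerivAt.tendsto_inv_norm_smul {F : Type*} [NormedAddCommGroup F] [NormedSpace ℝ F]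
    {g : E → F} {A : E →L[ℝ] F} (hg : HasFDerivAt g A 0) (hg0 : g 0 = 0) {α : Type*}
    {l : Filter α} {x : α → E} {ν : E} (hx : Tendsto x l (𝓝 0))
    (hν : Tendsto (fun a => ‖x a‖⁻¹ • x a) l (𝓝 ν)) :
    Tendsto (fun a => ‖x a‖⁻¹ • g (x a)) l (𝓝 (A ν)) := by
  have hrem : Tendsto (fun a => ‖x a‖⁻¹ • (g (x a) - A (x a))) l (𝓝 0) := by
    rw [tendsto_zero_iff_norm_tendsto_zero]
    simpa [norm_smul, hg0, Function.comp_def] using (hasFDerivAt_iff_tendsto.1 hg).comp hx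
  simpa [smul_sub] using hrem.add ((A.continuous.tendsto ν).comp hν)

theorem morse_secant_limit_eigenvector_negative_eigenvalue
    {n : ℕ}
    (f : EuclideanSpace ℝ (Fin n) → ℝ)
    (hgf0 : gradient f 0 = 0)
    (L : ℝ) (hL : 0 < L)
    (γ : ℝ → EuclideanSpace ℝ (Fin n))
    (hγreg : ∀ s ∈ Set.Ico (0 : ℝ) L, gradient f (γ s) ≠ 0)
    (hγode : ∀ s ∈ Set.Ico (0 : ℝ) L,
      HasDerivAt γ (‖gradient f (γ s)‖⁻¹ • gradient f (γ s)) s)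
    (hγlim : Tendsto γ (𝓝[<] L) (𝓝 0))
    (hMorse : Function.Bijective (fderiv ℝ (gradient f) 0))
    (ν : EuclideanSpace ℝ (Fin n)) (hν1 : ‖ν‖ = 1)
    (hνlim : Tendsto (fun s => ‖γ s‖⁻¹ • γ s) (𝓝[<] L) (𝓝 ν))
    :
    ∃ μ : ℝ, μ < 0 ∧ fderiv ℝ (gradient f) 0 ν = μ • ν ∧
      Tendsto (fun s => ‖gradient f (γ s)‖ / ‖γ s‖) (𝓝[<] L) (𝓝 (-μ)) := by
  set A := fderiv ℝ (gradient f) 0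
  have hν0 : ν ≠ 0 := norm_ne_zero_iff.1 (by simp [hν1])
  have hAν : A ν ≠ 0 := fun h => hν0 (hMorse.injective (by rw [h, map_zero]))
  -- `fderiv` takes the junk value `0` where `gradient f` is not differentiable.
  have hA : HasFDerivAt (gradient f) A 0 := by
    by_contra hnd
    exact hAν (by
      simp [A, fderiv_zero_of_not_differentiableAt (mt DifferentiableAt.hasFDerivAt hnd)])
  have hIco : ∀ᶠ s in 𝓝[<] L, s ∈ Ico 0 L :=
    mem_of_superset (Ioo_mem_nhdsLT hL) Ioo_subset_Ico_self
  have hγ0 : ∀ᶠ s in 𝓝[<] L, γ s ≠ 0 := hIco.mono fun s hs h0 => hγreg s hs (by rw [h0, hgf0])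
  have hgrad : Tendsto (fun s => ‖γ s‖⁻¹ • gradient f (γ s)) (𝓝[<] L) (𝓝 (A ν)) :=
    hA.tendsto_inv_norm_smul hgf0 hγlim hνlim
  set w := ‖A ν‖⁻¹ • A ν
  have hw : ‖w‖ = 1 := norm_smul_inv_norm hAν
  have hunit : Tendsto (fun s => ‖gradient f (γ s)‖⁻¹ • gradient f (γ s)) (𝓝[<] L) (𝓝 w) :=
    hgrad.inv_norm_smul_of_pos_smul (hγ0.mono fun s hs => inv_pos.2 (norm_pos_iff.2 hs)) hAν
  have hνw : ν = -w := by
    have hsecant := (tendsto_inv_sub_smul_of_tendsto_deriv (hIco.mono hγode) hγlim hunit)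
      |>.inv_norm_smul_of_pos_smul (hIco.mono fun s hs => inv_pos.2 (sub_pos.2 hs.2))
        (neg_ne_zero.2 (norm_ne_zero_iff.1 (by simp [hw])))
    rw [norm_neg, hw, inv_one, one_smul] at hsecant
    exact tendsto_nhds_unique hνlim hsecant
  refine ⟨-‖A ν‖, neg_lt_zero.2 (norm_pos_iff.2 hAν), ?_, ?_⟩
  · calc A ν = ‖A ν‖ • w := (smul_inv_smul₀ (norm_ne_zero_iff.2 hAν) (A ν)).symm
      _ = -‖A ν‖ • ν := by rw [hνw, neg_smul, smul_neg, neg_neg]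
  · rw [neg_neg]
    refine hgrad.norm.congr fun s => ?_
    rw [norm_smul, norm_inv, norm_norm, div_eq_inv_mul]
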